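/- arXiv:2012.14468 — 7 statements merged into one kernel-verified Lean document; each statement's English description precedes it below -/
import Mathlib

section
/- Let F = FreeGroup ℕ and, for k : ℕ, let F_k denote the subgroup Subgroup.closure (FreeGroup.of '' {i : ℕ | i < k}) of F. Fix n j : ℕ, a set X ⊆ (Fin j → F) of j-tuples, and an operation m : (Fin j → F) → (Fin j → F) → (Fin j → F). Assume: (i) for every group automorphism f : F ≃* F that fixes F_n pointwise and every v ∈ X, the tuple f ∘ v lies in X; (ii) m maps X × X into X, is associative and commutative on X, has an identity element e ∈ X for elements of X, and every v ∈ X has some w ∈ X with m v w = e (so (X, m) is an abelian group); (iii) for every automorphism f of F fixing F_n pointwise and all v, w ∈ X, f ∘ (m v w) = m (f ∘ v) (f ∘ w). Then every tuple v ∈ X all of whose coordinates lie in F_{n+1} has all of its coordinates in F_n. -/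
/-!
Write `x = e_n`, `y = e_{n+1}`, `z = e_{n+2}`, and let `A = v(xy)` and `B = v(xz)` be the images
of `v ∈ X` under the transvections `x ↦ xy` and `x ↦ xz`. Exchanging `y` and `z` exchanges `A`
and `B`, so in the abelian group `X` the element `A + B` is fixed by that exchange. A reduced word
fixed by a relabelling of letters only contains fixed letters, so the coordinates of `A + B` do not
involve `y`, and `A + B` is also fixed by `y ↦ x⁻¹y`. This automorphism sends `A` to `v(y)` and
fixes `B`, hence `v(xy) = v(y)`. Erasing `y` gives `v(x) = v(1)`: the coordinates of `v` do not
involve `x`.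
-/

namespace FreeGroup

variable {ι : Type*}

theorem eqOn_closure_of {G : Type*} [Group G] {f g : FreeGroup ι →* G} {s : Set ι}
    (h : ∀ i ∈ s, f (of i) = g (of i)) : ∀ x ∈ Subgroup.closure (of '' s), f x = g x :=
  fun _ hx => MonoidHom.eqOn_closure (by rintro _ ⟨i, hi, rfl⟩; exact h i hi) hx

theorem lift_mulIndicator_of_mem_closure (s : Set ι) (x : FreeGroup ι) :
    lift (s.mulIndicator of) x ∈ Subgroup.closure (of '' s) := by
  refine range_lift_le ?_ ⟨x, rfl⟩
  rintro _ ⟨i, rfl⟩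
  by_cases hi : i ∈ s
  · simpa [hi] using Subgroup.subset_closure (Set.mem_image_of_mem of hi)
  · simp [hi, one_mem]

variable [DecidableEq ι]

theorem toWord_map_of_injective {κ : Type*} [DecidableEq κ] {f : ι → κ} (hf : f.Injective)
    (x : FreeGroup ι) : (map f x).toWord = x.toWord.map fun p => (f p.1, p.2) := by
  rw [← mk_toWord (x := x), map.mk, toWord_mk, toWord_mk, reduce_toWord]
  exact IsReduced.reduce_eq <|
    List.isChain_map_of_isChain _ (fun p q h hpq => h (hf hpq)) isReduced_toWord

theorem mem_closure_of_toWord {s : Set ι} {x : FreeGroup ι} (h : ∀ p ∈ x.toWord, p.1 ∈ s) :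
    x ∈ Subgroup.closure (of '' s) := by
  have hx : x = (x.toWord.map fun p => cond p.2 (of p.1) (of p.1)⁻¹).prod := by
    rw [← lift_mk, lift_of_apply, mk_toWord]
  rw [hx]
  refine list_prod_mem ?_
  simp only [List.mem_map]
  rintro _ ⟨⟨i, b⟩, hp, rfl⟩
  have hi : of i ∈ Subgroup.closure (of '' s) := Subgroup.subset_closure ⟨i, h _ hp, rfl⟩
  cases b
  · exact inv_mem hi
  · exact hi

theorem mem_closure_of_map_eq_self {f : ι → ι} (hf : f.Injective) {x : FreeGroup ι}
    (h : map f x = x) : x ∈ Subgroup.closure (of '' {i | f i = i}) := by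
  have hword : x.toWord.map (fun p => (f p.1, p.2)) = x.toWord.map id := by
    rw [← toWord_map_of_injective hf, h, List.map_id]
  exact mem_closure_of_toWord fun p hp => congrArg Prod.fst (List.map_inj_left.1 hword p hp)

def transvection (a b : ι) (k l : ℤ) (hab : a ≠ b) : FreeGroup ι ≃* FreeGroup ι :=
  MonoidHom.toMulEquiv (lift (Function.update of a (of b ^ k * of a * of b ^ l)))
    (lift (Function.update of a (of b ^ (-k) * of a * of b ^ (-l))))
    (ext_hom _ _ fun i => by
      rcases eq_or_ne i a with rfl | hi
      · simp [Function.update_of_ne hab.symm]; group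
      · simp [hi])
    (ext_hom _ _ fun i => by
      rcases eq_or_ne i a with rfl | hi
      · simp [Function.update_of_ne hab.symm]; group
      · simp [hi])

variable {a b : ι} {k l : ℤ} {hab : a ≠ b}

@[simp]
theorem transvection_of_self : transvection a b k l hab (of a) = of b ^ k * of a * of b ^ l := by
  simp [transvection]

@[simp]
theorem transvection_of_of_ne {i : ι} (hi : i ≠ a) : transvection a b k l hab (of i) = of i := by
  simp [transvection, hi]

theorem transvection_apply_of_mem_closure {t : Set ι} (ha : a ∉ t) {x : FreeGroup ι}
    (hx : x ∈ Subgroup.closure (of '' t)) : transvection a b k l hab x = x :=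
  eqOn_closure_of (f := transvection a b k l hab) (g := MonoidHom.id _)
    (fun _ hi => transvection_of_of_ne (ne_of_mem_of_not_mem hi ha)) x hx

theorem freeGroupCongr_swap_apply_of_mem_closure {t : Set ι} {c : ι} (hb : b ∉ t) (hc : c ∉ t)
    {x : FreeGroup ι} (hx : x ∈ Subgroup.closure (of '' t)) :
    freeGroupCongr (Equiv.swap b c) x = x :=
  eqOn_closure_of (f := freeGroupCongr (Equiv.swap b c)) (g := MonoidHom.id _) (fun i hi => by
    simp [Equiv.swap_apply_of_ne_of_ne (ne_of_mem_of_not_mem hi hb)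
      (ne_of_mem_of_not_mem hi hc)]) x hx

variable {s : Set ι} {x : FreeGroup ι}

theorem freeGroupCongr_swap_transvection {c : ι} (hac : a ≠ c) (hb : b ∉ s) (hc : c ∉ s)
    (hx : x ∈ Subgroup.closure (of '' s)) :
    freeGroupCongr (Equiv.swap b c) (transvection a b k l hab x) = transvection a c k l hac x := by
  refine eqOn_closure_of (f := (freeGroupCongr (Equiv.swap b c) : FreeGroup ι →* FreeGroup ι).comp
    (transvection a b k l hab)) (g := transvection a c k l hac) (fun i hi => ?_) x hx
  rcases eq_or_ne i a with rfl | hia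
  · simp [Equiv.swap_apply_of_ne_of_ne hab hac]
  · simp [hia, Equiv.swap_apply_of_ne_of_ne (ne_of_mem_of_not_mem hi hb)
      (ne_of_mem_of_not_mem hi hc)]

theorem transvection_transvection_eq_freeGroupCongr_swap (hb : b ∉ s)
    (hx : x ∈ Subgroup.closure (of '' s)) :
    transvection b a (-1) 0 hab.symm (transvection a b 0 1 hab x) =
      freeGroupCongr (Equiv.swap a b) x := by
  refine eqOn_closure_of (f := (transvection b a (-1) 0 hab.symm : FreeGroup ι →* FreeGroup ι).comp
    (transvection a b 0 1 hab)) (g := freeGroupCongr (Equiv.swap a b)) (fun i hi => ?_) x hx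
  rcases eq_or_ne i a with rfl | hia
  · simp [hab]
  · have hib : i ≠ b := ne_of_mem_of_not_mem hi hb
    simp [hia, hib, Equiv.swap_apply_of_ne_of_ne hia hib]

theorem transvection_transvection_of_ne {c : ι} (hba : b ≠ a) (hac : a ≠ c) (hbc : b ≠ c)
    (hb : b ∉ s) (hx : x ∈ Subgroup.closure (of '' s)) :
    transvection b a k l hba (transvection a c 0 1 hac x) = transvection a c 0 1 hac x := by
  refine eqOn_closure_of (f := (transvection b a k l hba : FreeGroup ι →* FreeGroup ι).comp
    (transvection a c 0 1 hac)) (g := transvection a c 0 1 hac) (fun i hi => ?_) x hx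
  rcases eq_or_ne i a with rfl | hia
  · simp [hba.symm, hbc.symm]
  · simp [hia, ne_of_mem_of_not_mem hi hb]

theorem mem_closure_of_transvection_apply_eq_swap_apply {t : Set ι} (ha : a ∉ t) (hb : b ∉ t)
    (hx : x ∈ Subgroup.closure (of '' insert a t))
    (h : transvection a b 0 1 hab x = freeGroupCongr (Equiv.swap a b) x) :
    x ∈ Subgroup.closure (of '' t) := by
  let ρ : FreeGroup ι →* FreeGroup ι := lift (({b}ᶜ : Set ι).mulIndicator of)
  have hρα : ρ (transvection a b 0 1 hab x) = x := by
    refine eqOn_closure_of (f := ρ.comp (transvection a b 0 1 hab)) (g := MonoidHom.id _)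
      (fun i hi => ?_) x hx
    rcases eq_or_ne i a with rfl | hia
    · simp [ρ, hab]
    · simp [ρ, hia, show i ≠ b by rintro rfl; simp_all]
  have hρπ : ρ (freeGroupCongr (Equiv.swap a b) x) = lift (t.mulIndicator of) x := by
    refine eqOn_closure_of (f := ρ.comp (freeGroupCongr (Equiv.swap a b)))
      (g := lift (t.mulIndicator of)) (fun i hi => ?_) x hx
    rcases eq_or_ne i a with rfl | hia
    · simp [ρ, ha]
    · have hit : i ∈ t := by simpa [hia] using hi
      have hib : i ≠ b := ne_of_mem_of_not_mem hit hb
      simp [ρ, hit, hib, Equiv.swap_apply_of_ne_of_ne hia hib]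
  rw [← hρα, h, hρπ]
  exact lift_mulIndicator_of_mem_closure t x

end FreeGroup

theorem op_right_cancel {α : Type*} {X : Set α} {m : α → α → α} {e : α}
    (hassoc : ∀ v ∈ X, ∀ w ∈ X, ∀ u ∈ X, m (m v w) u = m v (m w u))
    (hid : ∀ v ∈ X, m v e = v) (hinv : ∀ v ∈ X, ∃ w ∈ X, m v w = e)
    {a b c : α} (ha : a ∈ X) (hb : b ∈ X) (hc : c ∈ X) (h : m a c = m b c) : a = b := by
  obtain ⟨c', hc', hcc'⟩ := hinv c hc
  calc a = m (m a c) c' := by rw [hassoc a ha c hc c' hc', hcc', hid a ha]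
    _ = m (m b c) c' := by rw [h]
    _ = b := by rw [hassoc b hb c hc c' hc', hcc', hid b hb]

open FreeGroup

theorem transvection_apply_eq_swap_apply_of_mem {ι κ : Type*} [DecidableEq ι]
    {X : Set (κ → FreeGroup ι)} {m : (κ → FreeGroup ι) → (κ → FreeGroup ι) → (κ → FreeGroup ι)}
    {e : κ → FreeGroup ι} {t : Set ι}
    (hXinv : ∀ f : FreeGroup ι ≃* FreeGroup ι, (∀ x ∈ Subgroup.closure (of '' t), f x = x) →
      ∀ v ∈ X, (fun i => f (v i)) ∈ X)
    (hassoc : ∀ v ∈ X, ∀ w ∈ X, ∀ u ∈ X, m (m v w) u = m v (m w u))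
    (hcomm : ∀ v ∈ X, ∀ w ∈ X, m v w = m w v)
    (hid : ∀ v ∈ X, m v e = v) (hinv : ∀ v ∈ X, ∃ w ∈ X, m v w = e)
    (hminv : ∀ f : FreeGroup ι ≃* FreeGroup ι, (∀ x ∈ Subgroup.closure (of '' t), f x = x) →
      ∀ v ∈ X, ∀ w ∈ X, (fun i => f (m v w i)) = m (fun i => f (v i)) (fun i => f (w i)))
    {a b c : ι} (hab : a ≠ b) (hbc : b ≠ c) (ha : a ∉ t) (hb : b ∉ insert a t)
    (hc : c ∉ insert a t) {v : κ → FreeGroup ι} (hv : v ∈ X)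
    (hv_mem : ∀ i, v i ∈ Subgroup.closure (of '' insert a t)) :
    (fun i => transvection a b 0 1 hab (v i)) = fun i => freeGroupCongr (Equiv.swap a b) (v i) := by
  have hac : a ≠ c := fun h => hc (h ▸ Set.mem_insert a t)
  have hbt : b ∉ t := fun h => hb (Set.mem_insert_of_mem a h)
  have hct : c ∉ t := fun h => hc (Set.mem_insert_of_mem a h)
  let α := transvection a b 0 1 hab
  let β := transvection a c 0 1 hac
  let σ := freeGroupCongr (Equiv.swap b c)
  let τ := transvection b a (-1) 0 hab.symm
  let π := freeGroupCongr (Equiv.swap a b)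
  have hα : ∀ x ∈ Subgroup.closure (of '' t), α x = x :=
    fun _ => transvection_apply_of_mem_closure ha
  have hβ : ∀ x ∈ Subgroup.closure (of '' t), β x = x :=
    fun _ => transvection_apply_of_mem_closure ha
  have hσ : ∀ x ∈ Subgroup.closure (of '' t), σ x = x :=
    fun _ => freeGroupCongr_swap_apply_of_mem_closure hbt hct
  have hτ : ∀ x ∈ Subgroup.closure (of '' t), τ x = x :=
    fun _ => transvection_apply_of_mem_closure hbt
  have hπ : ∀ x ∈ Subgroup.closure (of '' t), π x = x :=
    fun _ => freeGroupCongr_swap_apply_of_mem_closure ha hbt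
  let A := fun i => α (v i)
  let B := fun i => β (v i)
  have hAX : A ∈ X := hXinv α hα v hv
  have hBX : B ∈ X := hXinv β hβ v hv
  have hσA : (fun i => σ (A i)) = B :=
    funext fun i => freeGroupCongr_swap_transvection hac hb hc (hv_mem i)
  have hσB : (fun i => σ (B i)) = A := funext fun i => by
    rw [show σ = freeGroupCongr (Equiv.swap c b) by rw [Equiv.swap_comm]]
    exact freeGroupCongr_swap_transvection hab hc hb (hv_mem i)
  have hσAB : (fun i => σ (m A B i)) = m A B := by
    rw [hminv σ hσ A hAX B hBX, hσA, hσB, hcomm B hBX A hAX]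
  have hτAB : (fun i => τ (m A B i)) = m A B := funext fun i =>
    transvection_apply_of_mem_closure (t := {l | Equiv.swap b c l = l})
      (by simp [Equiv.swap_apply_left, hbc.symm])
      (mem_closure_of_map_eq_self (Equiv.injective _) (congrFun hσAB i))
  refine op_right_cancel hassoc hid hinv hAX (hXinv π hπ v hv) hBX ?_
  calc m A B = fun i => τ (m A B i) := hτAB.symm
    _ = m (fun i => τ (A i)) (fun i => τ (B i)) := hminv τ hτ A hAX B hBX
    _ = m (fun i => π (v i)) B := by
      congr 1
      · exact funext fun i => transvection_transvection_eq_freeGroupCongr_swap hb (hv_mem i)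
      · exact funext fun i => transvection_transvection_of_ne hab.symm hac hbc hb (hv_mem i)

theorem noncommutativity_argument_general (n j : ℕ)
    (X : Set (Fin j → FreeGroup ℕ))
    (m : (Fin j → FreeGroup ℕ) → (Fin j → FreeGroup ℕ) → (Fin j → FreeGroup ℕ))
    (hXinv : ∀ f : FreeGroup ℕ ≃* FreeGroup ℕ,
      (∀ x ∈ Subgroup.closure (FreeGroup.of '' {i : ℕ | i < n}), f x = x) →
      ∀ v ∈ X, (fun i => f (v i)) ∈ X)
    (hassoc : ∀ v ∈ X, ∀ w ∈ X, ∀ u ∈ X, m (m v w) u = m v (m w u))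
    (hcomm : ∀ v ∈ X, ∀ w ∈ X, m v w = m w v)
    (e : Fin j → FreeGroup ℕ)
    (hid : ∀ v ∈ X, m v e = v ∧ m e v = v)
    (hinv : ∀ v ∈ X, ∃ w ∈ X, m v w = e)
    (hminv : ∀ f : FreeGroup ℕ ≃* FreeGroup ℕ,
      (∀ x ∈ Subgroup.closure (FreeGroup.of '' {i : ℕ | i < n}), f x = x) →
      ∀ v ∈ X, ∀ w ∈ X,
        (fun i => f (m v w i)) = m (fun i => f (v i)) (fun i => f (w i))) :
    ∀ v ∈ X, (∀ i : Fin j, v i ∈ Subgroup.closure (FreeGroup.of '' {i : ℕ | i < n + 1})) →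
      ∀ i : Fin j, v i ∈ Subgroup.closure (FreeGroup.of '' {i : ℕ | i < n}) := by
  intro v hv hv_mem
  have hsucc : {i : ℕ | i < n + 1} = insert n {i | i < n} := by
    ext i; simp; omega
  rw [hsucc] at hv_mem
  have hαπ := transvection_apply_eq_swap_apply_of_mem hXinv hassoc hcomm
    (fun w hw => (hid w hw).1) hinv hminv (a := n) (b := n + 1) (c := n + 2) (by omega)
    (by omega) (by simp) (by simp) (by simp) hv hv_mem
  exact fun i => mem_closure_of_transvection_apply_eq_swap_apply (by simp) (by simp) (hv_mem i)
    (congrFun hαπ i)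

/-- The noncommutativity argument (automorphism-invariance form), Section 2 of the paper:
a subset `X` of `j`-tuples of the free group on countably many generators, invariant under
all automorphisms fixing the subgroup generated by the first `n` generators pointwise, and
carrying an invariant abelian group operation, gains no new tuples when passing from the
free group on the first `n + 1` generators to the free group on the first `n` generators. -/
theorem noncommutativity_argument (n j : ℕ)
    (X : Set (Fin j → FreeGroup ℕ))
    (m : (Fin j → FreeGroup ℕ) → (Fin j → FreeGroup ℕ) → (Fin j → FreeGroup ℕ))
    (hXinv : ∀ f : FreeGroup ℕ ≃* FreeGroup ℕ,
      (∀ x ∈ Subgroup.closure (FreeGroup.of '' {i : ℕ | i < n}), f x = x) →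
      ∀ v ∈ X, (fun i => f (v i)) ∈ X)
    (hclosed : ∀ v ∈ X, ∀ w ∈ X, m v w ∈ X)
    (hassoc : ∀ v ∈ X, ∀ w ∈ X, ∀ u ∈ X, m (m v w) u = m v (m w u))
    (hcomm : ∀ v ∈ X, ∀ w ∈ X, m v w = m w v)
    (e : Fin j → FreeGroup ℕ) (he : e ∈ X)
    (hid : ∀ v ∈ X, m v e = v ∧ m e v = v)
    (hinv : ∀ v ∈ X, ∃ w ∈ X, m v w = e)
    (hminv : ∀ f : FreeGroup ℕ ≃* FreeGroup ℕ,
      (∀ x ∈ Subgroup.closure (FreeGroup.of '' {i : ℕ | i < n}), f x = x) →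
      ∀ v ∈ X, ∀ w ∈ X,
        (fun i => f (m v w i)) = m (fun i => f (v i)) (fun i => f (w i))) :
    ∀ v ∈ X, (∀ i : Fin j, v i ∈ Subgroup.closure (FreeGroup.of '' {i : ℕ | i < n + 1})) →
      ∀ i : Fin j, v i ∈ Subgroup.closure (FreeGroup.of '' {i : ℕ | i < n}) :=
  noncommutativity_argument_general n j X m hXinv hassoc hcomm e hid hinv hminv
end

section
/- Let A and H be groups, φ : A →* H an injective homomorphism, n : ℕ, and let G = Monoid.PushoutI (fun _ : Fin n => φ) be the star of isomorphic groups with n rays, with ray-permuting homomorphisms Φ σ : G →* G for σ : Equiv.Perm (Fin n). Assume that for every nontrivial a ∈ A the centralizer of base a in G is contained in the image of base, i.e. Subgroup.centralizer {base a} ≤ base.range. Suppose g ∈ G admits a reduced word datum of length l, h ∈ G is nontrivial and admits a reduced word datum of length m, and l + m ≥ 1. Then for every k : ℕ there exists a finset T of permutations of Fin n with T.card = (n − 2) / 2 (natural-number operations, i.e. ⌊(n−2)/2⌋) such that for all σ, τ ∈ T with σ ≠ τ, the pairs (Φ σ g, Φ σ h) and (Φ τ g, Φ τ h) are not related by the k-coset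 relation. -/
open Monoid

/-- A reduced word datum of length `l.length` for an element `g` of the star of isomorphic
groups `Monoid.PushoutI (fun _ : Fin n => φ)`. -/
def IsReducedDatum {A H : Type*} [Group A] [Group H] {n : ℕ} (φ : A →* H)
    (g : Monoid.PushoutI (fun _ : Fin n => φ)) (a : A) (l : List (Fin n × H)) : Prop :=
  (∀ p ∈ l, p.2 ∉ Set.range φ) ∧
  l.Chain' (fun p q => p.1 ≠ q.1) ∧
  g = Monoid.PushoutI.base (fun _ : Fin n => φ) a *
      (l.map fun p => Monoid.PushoutI.of (φ := fun _ : Fin n => φ) p.1 p.2).prod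

/-- The `k`-coset equivalence relation on pairs of elements of a group. -/
def CosetRel {G : Type*} [Group G] (k : ℕ) (p q : G × G) : Prop :=
  (p.2 = 1 ∧ q.2 = 1) ∨
    (p.2 ≠ 1 ∧ q.2 ≠ 1 ∧ ∃ b : G,
      Subgroup.centralizer {p.2} = Subgroup.zpowers b ∧
      Subgroup.centralizer {q.2} = Subgroup.zpowers b ∧
      p.1⁻¹ * q.1 ∈ Subgroup.zpowers (b ^ k))

/-!
The ray indices of a reduced word are determined by the element it represents (normal form
theorem for amalgamated products). Pick `⌊(n-2)/2⌋` permutations sending the first and last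
rays `i, j` of the relevant word into pairwise disjoint pairs of rays; then for distinct `σ, τ`
in the family, `σ i ≠ τ i` and `σ j ≠ τ i`.

If `h` lies in the amalgamated subgroup, it is fixed by all `Φ σ`, and a `k`-coset relation puts
`(Φ σ g)⁻¹ * Φ τ g` in the centralizer of `h`, hence in the amalgamated subgroup; but this element
has a nonempty reduced word, because the words of `Φ σ g` and `Φ τ g` begin in different rays.
Otherwise the relation makes `Φ σ h` and `Φ τ h` commute, whereas both products
`Φ σ h * Φ τ h` and `Φ τ h * Φ σ h` are reduced concatenations, beginning in different rays.
-/

namespace Monoid.PushoutI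

variable {ι : Type*} {G : ι → Type*} {K : Type*} [∀ i, Group (G i)] [Group K]
  {φ : ∀ i, K →* G i}

theorem Reduced.map_fst_eq_of_base_mul_prod_eq (hφ : ∀ i, Function.Injective (φ i))
    {w₁ w₂ : CoprodI.Word G} (hw₁ : Reduced φ w₁) (hw₂ : Reduced φ w₂) {a₁ a₂ : K}
    (h : base φ a₁ * ofCoprodI w₁.prod = base φ a₂ * ofCoprodI w₂.prod) :
    w₁.toList.map Sigma.fst = w₂.toList.map Sigma.fst := by
  obtain ⟨d⟩ := NormalWord.transversal_nonempty φ hφ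
  obtain ⟨v₁, hv₁, hfst₁⟩ := hw₁.exists_normalWord_prod_eq d
  obtain ⟨v₂, hv₂, hfst₂⟩ := hw₂.exists_normalWord_prod_eq d
  have hv : a₁ • v₁ = a₂ • v₂ :=
    NormalWord.prod_injective <| by
      rw [NormalWord.prod_base_smul, NormalWord.prod_base_smul, hv₁, hv₂, h]
  have hlist : v₁.toList = v₂.toList := congrArg (·.toList) hv
  rw [← hfst₁, ← hfst₂, hlist]

theorem comp_base_eq_base {A H : Type*} [Group A] [Group H] {φ : A →* H} [Nonempty ι]
    {f : PushoutI (fun _ : ι => φ) →* PushoutI (fun _ : ι => φ)} {σ : ι → ι}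
    (hf : ∀ i, f.comp (of i) = of (φ := fun _ : ι => φ) (σ i)) :
    f.comp (base _) = base _ := by
  obtain ⟨i⟩ := ‹Nonempty ι›
  rw [← of_comp_eq_base i, ← MonoidHom.comp_assoc, hf, of_comp_eq_base, of_comp_eq_base]

end Monoid.PushoutI

namespace IsReducedDatum

open PushoutI

variable {A H : Type*} [Group A] [Group H] {n : ℕ} {φ : A →* H}
  {g g₁ g₂ : PushoutI (fun _ : Fin n => φ)} {a a₁ a₂ : A} {l l₁ l₂ : List (Fin n × H)}

theorem isChain (hg : IsReducedDatum φ g a l) : l.IsChain (fun p q => p.1 ≠ q.1) := hg.2.1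

def word (hg : IsReducedDatum φ g a l) : CoprodI.Word (fun _ : Fin n => H) where
  toList := l.map fun p => ⟨p.1, p.2⟩
  ne_one := by
    simp only [List.mem_map]
    rintro _ ⟨p, hp, rfl⟩ h1
    exact hg.1 p hp ⟨1, by simpa using h1.symm⟩
  chain_ne := (List.isChain_map _).2 hg.isChain

theorem word_toList_map_fst (hg : IsReducedDatum φ g a l) :
    hg.word.toList.map Sigma.fst = l.map Prod.fst := by
  simp [word]

theorem reduced_word (hg : IsReducedDatum φ g a l) : Reduced (fun _ => φ) hg.word := by
  simp only [Reduced, word, List.mem_map]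
  rintro _ ⟨p, hp, rfl⟩
  exact hg.1 p hp

theorem eq_base_mul_word (hg : IsReducedDatum φ g a l) :
    g = base _ a * ofCoprodI hg.word.prod := by
  refine hg.2.2.trans ?_
  simp [word, CoprodI.Word.prod, map_list_prod, Function.comp_def, ofCoprodI_of]

theorem map_fst_eq (hφ : Function.Injective φ) (h₁ : IsReducedDatum φ g a₁ l₁)
    (h₂ : IsReducedDatum φ g a₂ l₂) : l₁.map Prod.fst = l₂.map Prod.fst := by
  rw [← h₁.word_toList_map_fst, ← h₂.word_toList_map_fst]
  exact h₁.reduced_word.map_fst_eq_of_base_mul_prod_eq (fun _ => hφ) h₂.reduced_word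
    (h₁.eq_base_mul_word.symm.trans h₂.eq_base_mul_word)

theorem eq_nil_of_mem_range (hφ : Function.Injective φ) (hg : IsReducedDatum φ g a l)
    (hmem : g ∈ (base (fun _ : Fin n => φ)).range) : l = [] := by
  have hword : ofCoprodI hg.word.prod ∈ (base (fun _ : Fin n => φ)).range := by
    obtain ⟨c, hc⟩ := hmem
    exact ⟨a⁻¹ * c, by
      rw [map_mul, hc, map_inv, inv_mul_eq_iff_eq_mul]
      exact hg.eq_base_mul_word⟩
  simpa [word] using congrArg CoprodI.Word.toList
    (hg.reduced_word.eq_empty_of_mem_range (fun _ => hφ) hword)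

theorem map (hg : IsReducedDatum φ g a l) (σ : Equiv.Perm (Fin n))
    {f : PushoutI (fun _ : Fin n => φ) →* PushoutI (fun _ : Fin n => φ)}
    (hf : ∀ i, f.comp (of i) = of (φ := fun _ : Fin n => φ) (σ i))
    (hfb : f.comp (base _) = base _) :
    IsReducedDatum φ (f g) a (l.map (Prod.map σ id)) := by
  refine ⟨?_, ?_, ?_⟩
  · simp only [List.mem_map]
    rintro _ ⟨p, hp, rfl⟩
    exact hg.1 p hp
  · show List.IsChain _ _
    exact (List.isChain_map _).2 (hg.isChain.imp fun _ _ => σ.injective.ne)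
  · rw [hg.2.2, map_mul, ← MonoidHom.comp_apply f (base (fun _ : Fin n => φ)), hfb,
      map_list_prod, List.map_map, List.map_map]
    congr 2
    exact List.map_congr_left fun p _ => DFunLike.congr_fun (hf p.1) p.2

theorem mul {q : Fin n × H} (h₁ : IsReducedDatum φ g₁ a₁ l₁)
    (h₂ : IsReducedDatum φ g₂ a₂ (q :: l₂)) (hj : ∀ r ∈ l₁.getLast?, r.1 ≠ q.1) :
    IsReducedDatum φ (g₁ * g₂) a₁ (l₁ ++ (q.1, φ a₂ * q.2) :: l₂) := by
  refine ⟨?_, ?_, ?_⟩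
  · simp only [List.mem_append, List.mem_cons]
    rintro r (hr | rfl | hr)
    · exact h₁.1 r hr
    · rintro ⟨c, hc⟩
      exact h₂.1 q List.mem_cons_self ⟨a₂⁻¹ * c, by simp [hc]⟩
    · exact h₂.1 r (List.mem_cons_of_mem _ hr)
  · show List.IsChain _ _
    refine List.isChain_append.2 ⟨h₁.isChain, ?_, fun r hr s hs => ?_⟩
    · simpa only [List.isChain_cons] using h₂.isChain
    · simp only [List.head?_cons, Option.mem_def, Option.some.injEq] at hs
      exact hs ▸ hj r hr
  · simp [h₁.2.2, h₂.2.2, ← of_apply_eq_base _ q.1 a₂, mul_assoc]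

theorem inv_mul (h₁ : IsReducedDatum φ g₁ a l₁) (h₂ : IsReducedDatum φ g₂ a l₂)
    (hj : ∀ r ∈ l₁.head?, ∀ s ∈ l₂.head?, r.1 ≠ s.1) :
    IsReducedDatum φ (g₁⁻¹ * g₂) 1 ((l₁.reverse.map (Prod.map id (·⁻¹))) ++ l₂) := by
  refine ⟨?_, ?_, ?_⟩
  · simp only [List.mem_append, List.mem_map, List.mem_reverse]
    rintro _ (⟨p, hp, rfl⟩ | hr)
    · rintro ⟨c, hc⟩
      exact h₁.1 p hp ⟨c⁻¹, by simp [hc]⟩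
    · exact h₂.1 _ hr
  · show List.IsChain _ _
    refine List.isChain_append.2 ⟨?_, h₂.isChain, fun r hr s hs => ?_⟩
    · exact (List.isChain_map _).2 (List.isChain_reverse.2 (h₁.isChain.imp fun _ _ => Ne.symm))
    · simp only [List.getLast?_map, List.getLast?_reverse, Option.mem_def,
        Option.map_eq_some_iff] at hr
      obtain ⟨p, hp, rfl⟩ := hr
      exact hj p hp s hs
  · rw [h₁.2.2, h₂.2.2, mul_inv_rev, List.prod_inv_reverse]
    simp [List.map_reverse, Function.comp_def, mul_assoc]

end IsReducedDatum

namespace CosetRel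

variable {G : Type*} [Group G] {k : ℕ} {p q : G × G}

theorem commute (h : CosetRel k p q) : Commute p.2 q.2 := by
  rcases h with ⟨hp, hq⟩ | ⟨-, -, b, hpb, hqb, -⟩
  · rw [hp, hq]
  · have hp : p.2 ∈ Subgroup.zpowers b := hpb ▸ Subgroup.mem_centralizer_singleton_iff.2 rfl
    have hq : q.2 ∈ Subgroup.zpowers b := hqb ▸ Subgroup.mem_centralizer_singleton_iff.2 rfl
    obtain ⟨i, hi⟩ := Subgroup.mem_zpowers_iff.1 hp
    obtain ⟨j, hj⟩ := Subgroup.mem_zpowers_iff.1 hq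
    exact hi ▸ hj ▸ Commute.zpow_zpow_self b i j

theorem inv_mul_mem_centralizer (h : CosetRel k p q) (hp : p.2 ≠ 1) :
    p.1⁻¹ * q.1 ∈ Subgroup.centralizer {p.2} := by
  rcases h with ⟨hp1, -⟩ | ⟨-, -, b, hpb, -, hk⟩
  · exact absurd hp1 hp
  · rw [hpb]
    exact Subgroup.zpowers_le.2 (Subgroup.pow_mem _ (Subgroup.mem_zpowers b) k) hk

end CosetRel

theorem exists_perm_apply_eq_apply_eq {α : Type*} {x y a b : α} (hxy : x ≠ y) (hab : a ≠ b) :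
    ∃ σ : Equiv.Perm α, σ x = a ∧ σ y = b := by
  obtain ⟨σ, hσ⟩ := Equiv.Perm.exists_extending_pair ![x, y] ![a, b]
    (by simp [Function.Injective, Fin.forall_fin_two, hxy, hxy.symm])
    (by simp [Function.Injective, Fin.forall_fin_two, hab, hab.symm])
  exact ⟨σ, hσ 0, hσ 1⟩

theorem exists_finset_perm_apply_ne {α : Type*} [Fintype α] {t : ℕ}
    (ht : 2 * t ≤ Fintype.card α) (x y : α) :
    ∃ T : Finset (Equiv.Perm α), T.card = t ∧
      ∀ σ ∈ T, ∀ τ ∈ T, σ ≠ τ → σ x ≠ τ x ∧ σ y ≠ τ x := by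
  classical
  obtain ⟨e⟩ : Nonempty (Fin t ⊕ Fin t ↪ α) :=
    Function.Embedding.nonempty_of_card_le (by simpa [two_mul] using ht)
  have hperm : ∀ j, ∃ σ : Equiv.Perm α,
      σ x = e (.inl j) ∧ (σ y = e (.inl j) ∨ σ y = e (.inr j)) := by
    intro j
    by_cases hxy : x = y
    · exact ⟨Equiv.swap x (e (.inl j)), by simp, .inl (by simp [← hxy])⟩
    · obtain ⟨σ, hσx, hσy⟩ := exists_perm_apply_eq_apply_eq hxy (e.injective.ne Sum.inl_ne_inr)
      exact ⟨σ, hσx, .inr hσy⟩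
  choose σ hσx hσy using hperm
  have hσ : Function.Injective σ := fun j j' h =>
    Sum.inl_injective (e.injective (by rw [← hσx, ← hσx, h]))
  refine ⟨Finset.univ.map ⟨σ, hσ⟩, by simp, ?_⟩
  simp only [Finset.mem_map, Finset.mem_univ, true_and, Function.Embedding.coeFn_mk]
  rintro _ ⟨j, rfl⟩ _ ⟨j', rfl⟩ hjj'
  have hne : j ≠ j' := fun h => hjj' (h ▸ rfl)
  rw [hσx, hσx]
  refine ⟨e.injective.ne (Sum.inl_injective.ne hne), ?_⟩
  rcases hσy j with h | h <;> rw [h] <;> simp [hne]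

section RayPermutations

open PushoutI

variable {A H : Type*} [Group A] [Group H] {n : ℕ} {φ : A →* H}
  {Φ : Equiv.Perm (Fin n) →
    (PushoutI (fun _ : Fin n => φ) →* PushoutI (fun _ : Fin n => φ))}

theorem not_cosetRel_of_mem_range (hφ : Function.Injective φ)
    (hΦ : ∀ σ i, (Φ σ).comp (of i) = of (φ := fun _ : Fin n => φ) (σ i))
    (hcent : ∀ a : A, a ≠ 1 →
      Subgroup.centralizer {base (fun _ : Fin n => φ) a} ≤ (base (fun _ : Fin n => φ)).range)
    {g h : PushoutI (fun _ : Fin n => φ)} {a : A} {p : Fin n × H} {l : List (Fin n × H)}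
    (hg : IsReducedDatum φ g a (p :: l)) (hh : h ≠ 1) (hbase : h ∈ (base _).range)
    {σ τ : Equiv.Perm (Fin n)} (hστ : σ p.1 ≠ τ p.1) (k : ℕ) :
    ¬ CosetRel k (Φ σ g, Φ σ h) (Φ τ g, Φ τ h) := by
  have : Nonempty (Fin n) := ⟨p.1⟩
  have hΦb : ∀ σ, (Φ σ).comp (base _) = base _ := fun σ => comp_base_eq_base (hΦ σ)
  obtain ⟨c, rfl⟩ := hbase
  have hfix : ∀ σ, Φ σ (base _ c) = base _ c := fun σ => DFunLike.congr_fun (hΦb σ) c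
  intro hrel
  have hc : c ≠ 1 := by
    rintro rfl
    exact hh (map_one _)
  have hrange := hcent c hc
    (by simpa only [hfix] using hrel.inv_mul_mem_centralizer (by simpa only [hfix] using hh))
  have hd := (hg.map σ (hΦ σ) (hΦb σ)).inv_mul (hg.map τ (hΦ τ) (hΦb τ)) (by simpa using hστ)
  simpa using hd.eq_nil_of_mem_range hφ hrange

theorem not_cosetRel_of_ne_nil (hφ : Function.Injective φ)
    (hΦ : ∀ σ i, (Φ σ).comp (of i) = of (φ := fun _ : Fin n => φ) (σ i))
    {h : PushoutI (fun _ : Fin n => φ)} {a : A}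
    {l : List (Fin n × H)} (hh : IsReducedDatum φ h a l) (hl : l ≠ [])
    {σ τ : Equiv.Perm (Fin n)} (hhead : σ (l.head hl).1 ≠ τ (l.head hl).1)
    (hστ : σ (l.getLast hl).1 ≠ τ (l.head hl).1) (hτσ : τ (l.getLast hl).1 ≠ σ (l.head hl).1)
    (x y : PushoutI (fun _ : Fin n => φ)) (k : ℕ) :
    ¬ CosetRel k (x, Φ σ h) (y, Φ τ h) := by
  obtain ⟨q, l', rfl⟩ := List.exists_cons_of_ne_nil hl
  have : Nonempty (Fin n) := ⟨q.1⟩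
  have hd : ∀ σ, IsReducedDatum φ (Φ σ h) a ((σ q.1, q.2) :: l'.map (Prod.map σ id)) :=
    fun σ => hh.map σ (hΦ σ) (comp_base_eq_base (hΦ σ))
  have hlast : ∀ σ : Equiv.Perm (Fin n), ∀ r ∈ ((σ q.1, q.2) :: l'.map (Prod.map σ id)).getLast?,
      r.1 = σ ((q :: l').getLast hl).1 := by
    intro σ r hr
    change r ∈ ((q :: l').map (Prod.map σ id)).getLast? at hr
    rw [List.getLast?_map, List.getLast?_eq_some_getLast hl, Option.map_some,
      Option.mem_some_iff] at hr
    rw [← hr]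
    rfl
  intro hrel
  have h₁ := (hd σ).mul (hd τ) fun r hr => hlast σ r hr ▸ hστ
  have h₂ := (hd τ).mul (hd σ) fun r hr => hlast τ r hr ▸ hτσ
  rw [← hrel.commute.eq] at h₂
  exact hhead (by simpa using congrArg List.head? (h₁.map_fst_eq hφ h₂))

end RayPermutations

/-- Lemma 3.3 (OrbitsCosets): in a star of isomorphic groups with `n` rays, in which
centralizers of nontrivial elements of the amalgamated subgroup lie in the amalgamated
subgroup, the orbit of a pair `(g, h)` (with `h ≠ 1`, both given by reduced words whose
lengths sum to at least 1) under the ray-permuting automorphisms meets at least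
`⌊(n-2)/2⌋` many `k`-cosets, for every `k`. -/
theorem orbits_cosets {A H : Type*} [Group A] [Group H] (φ : A →* H)
    (hφ : Function.Injective φ) (n : ℕ)
    (Φ : Equiv.Perm (Fin n) →
      (Monoid.PushoutI (fun _ : Fin n => φ) →* Monoid.PushoutI (fun _ : Fin n => φ)))
    (hΦ : ∀ (σ : Equiv.Perm (Fin n)) (i : Fin n),
      (Φ σ).comp (Monoid.PushoutI.of (φ := fun _ : Fin n => φ) i) =
        Monoid.PushoutI.of (φ := fun _ : Fin n => φ) (σ i))
    (hcent : ∀ a : A, a ≠ 1 →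
      Subgroup.centralizer {Monoid.PushoutI.base (fun _ : Fin n => φ) a} ≤
        (Monoid.PushoutI.base (fun _ : Fin n => φ)).range)
    (g h : Monoid.PushoutI (fun _ : Fin n => φ))
    (ag ah : A) (lg lh : List (Fin n × H)) (l m : ℕ)
    (hlg : lg.length = l) (hlh : lh.length = m)
    (hredg : IsReducedDatum φ g ag lg) (hredh : IsReducedDatum φ h ah lh)
    (hh : h ≠ 1) (hlm : 1 ≤ l + m) :
    ∀ k : ℕ, ∃ T : Finset (Equiv.Perm (Fin n)), T.card = (n - 2) / 2 ∧
      ∀ σ ∈ T, ∀ τ ∈ T, σ ≠ τ →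
        ¬ CosetRel k (Φ σ g, Φ σ h) (Φ τ g, Φ τ h) := by
  intro k
  have hcard : 2 * ((n - 2) / 2) ≤ Fintype.card (Fin n) := by
    rw [Fintype.card_fin]
    omega
  rcases eq_or_ne lh [] with rfl | hl
  · obtain ⟨p, lg', rfl⟩ := List.exists_cons_of_ne_nil (l := lg) (by
      rintro rfl
      simp only [List.length_nil] at hlg hlh
      omega)
    have hbase : h ∈ (Monoid.PushoutI.base (fun _ : Fin n => φ)).range :=
      ⟨ah, by simpa using hredh.2.2.symm⟩
    obtain ⟨T, hT, hsep⟩ := exists_finset_perm_apply_ne hcard p.1 p.1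
    exact ⟨T, hT, fun σ hσ τ hτ hστ =>
      not_cosetRel_of_mem_range hφ hΦ hcent hredg hh hbase (hsep σ hσ τ hτ hστ).1 k⟩
  · obtain ⟨T, hT, hsep⟩ := exists_finset_perm_apply_ne hcard (lh.head hl).1 (lh.getLast hl).1
    exact ⟨T, hT, fun σ hσ τ hτ hστ =>
      not_cosetRel_of_ne_nil hφ hΦ hredh hl (hsep σ hσ τ hτ hστ).1 (hsep σ hσ τ hτ hστ).2
        (hsep τ hτ σ hσ hστ.symm).2 _ _ k⟩
end

section
/- Let A and H be groups, φ : A →* H an injective homomorphism, n : ℕ, and let G = Monoid.PushoutI (fun _ : Fin n => φ) be the star of isomorphic groups with n rays, with ray-permuting homomorphisms Φ σ : G →* G for σ : Equiv.Perm (Fin n). Assume that for every nontrivial a ∈ A the centralizer of base a in G satisfies Subgroup.centralizer {base a} ≤ base.range. Suppose u, g, h ∈ G admit reduced word data of lengths p, l, m respectively, with u ≠ 1, h ≠ 1, and p + l + m ≥ 1. Then for all q, k : ℕ there exists a finset T of permutations of Fin n with T.card = (n − 2) / 2 (natural-number operations, i.e. ⌊(n−2)/2⌋) such that for all σ, τ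 ∈ T with σ ≠ τ, the triples (Φ σ u, Φ σ g, Φ σ h) and (Φ τ u, Φ τ g, Φ τ h) are not related by the (q,k)-double-coset relation. -/
open Monoid

/-- The `(q,k)`-double-coset equivalence relation on triples of elements of a group. -/
def DCosetRel {G : Type*} [Group G] (q k : ℕ) (x y : G × G × G) : Prop :=
  (x.1 = 1 ∧ y.1 = 1) ∨ (x.2.2 = 1 ∧ y.2.2 = 1) ∨
    (x.1 ≠ 1 ∧ x.2.2 ≠ 1 ∧ ∃ a c : G,
      Subgroup.centralizer {x.1} = Subgroup.zpowers a ∧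
      Subgroup.centralizer {y.1} = Subgroup.zpowers a ∧
      Subgroup.centralizer {x.2.2} = Subgroup.zpowers c ∧
      Subgroup.centralizer {y.2.2} = Subgroup.zpowers c ∧
      ∃ γ ∈ Subgroup.zpowers (a ^ q), ∃ ε ∈ Subgroup.zpowers (c ^ k),
        γ * x.2.1 * ε = y.2.1)

/-!
Let `f` and `ℓ` be the first and last ray of a reduced word. There are `⌊n/2⌋` permutations
mapping `{f, ℓ}` into the pairwise disjoint pairs `{2t, 2t+1}`. Related triples with nontrivial
ends have commuting first entries, since their centralizers coincide. But if `u` has a nonempty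
reduced word, then for two such permutations `σ ≠ τ` the words of `σu` and `τu` concatenate in
either order without cancellation, giving reduced forms of `σu·τu` and `τu·σu` that start in the
different rays `σf` and `τf`; so `σu` and `τu` do not commute. The same applies to `h`. If `u`
and `h` both lie in the amalgamated subgroup `A`, their centralizers lie in `A`, so a relation
would put `σg` and `τg` in one double coset `A·σg·A`, which preserves the first ray of a reduced
word, although `σf ≠ τf`.
-/

open PushoutI

theorem exists_perm_apply_eq_and_apply_mem {α : Type*} (f ℓ : α) {c d : α} (hcd : c ≠ d) :
    ∃ π : Equiv.Perm α, π f = c ∧ π ℓ ∈ ({c, d} : Set α) := by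
  classical
  by_cases hfℓ : f = ℓ
  · exact ⟨Equiv.swap f c, by simp, by simp [← hfℓ]⟩
  · have hℓ : Equiv.swap f c ℓ ≠ c := by
      rw [Ne, Equiv.swap_apply_eq_iff, Equiv.swap_apply_right]
      exact Ne.symm hfℓ
    refine ⟨Equiv.swap (Equiv.swap f c ℓ) d * Equiv.swap f c, ?_, by simp⟩
    rw [Equiv.Perm.mul_apply, Equiv.swap_apply_left]
    exact Equiv.swap_apply_of_ne_of_ne hℓ.symm hcd

theorem exists_finset_perm_pairwise_disjoint_image {n k : ℕ} (hk : 2 * k ≤ n) (f ℓ : Fin n) :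
    ∃ T : Finset (Equiv.Perm (Fin n)), T.card = k ∧
      (T : Set (Equiv.Perm (Fin n))).Pairwise
        fun σ τ => Disjoint (σ '' {f, ℓ}) (τ '' {f, ℓ}) := by
  choose π hπf hπℓ using fun t : Fin k =>
    exists_perm_apply_eq_and_apply_mem f ℓ (c := ⟨2 * t, by omega⟩) (d := ⟨2 * t + 1, by omega⟩)
      (by simp)
  have hπ (t : Fin k) : ∀ x ∈ ({f, ℓ} : Set (Fin n)), (π t x : ℕ) / 2 = t := by
    rintro x (rfl | rfl)
    · simp [hπf]
    · obtain h | h : π t x = _ ∨ π t x = _ := hπℓ t <;> simp only [h] <;> omega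
  have hinj : Function.Injective π := fun t t' htt' =>
    Fin.ext <| by rw [← hπ t f (by simp), ← hπ t' f (by simp), htt']
  refine ⟨Finset.univ.image π, by simp [Finset.card_image_of_injective _ hinj], ?_⟩
  simp only [Finset.coe_image, Finset.coe_univ, Set.image_univ]
  rintro _ ⟨t, rfl⟩ _ ⟨t', rfl⟩ htt'
  rw [Set.disjoint_iff_forall_ne]
  rintro _ ⟨x, hx, rfl⟩ _ ⟨y, hy, rfl⟩ hxy
  exact htt' (congrArg π (Fin.ext (by rw [← hπ t x hx, ← hπ t' y hy, hxy])))

theorem DCosetRel.commute_and_exists_of_ne_one {G : Type*} [Group G] {q k : ℕ}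
    {x y : G × G × G} (hxy : DCosetRel q k x y) (h₁ : x.1 ≠ 1) (h₃ : x.2.2 ≠ 1) :
    Commute x.1 y.1 ∧ Commute x.2.2 y.2.2 ∧
      ∃ γ ∈ Subgroup.centralizer {x.1}, ∃ ε ∈ Subgroup.centralizer {x.2.2},
        γ * x.2.1 * ε = y.2.1 := by
  obtain ⟨-, -, a, c, ha, ha', hc, hc', γ, hγ, ε, hε, hγε⟩ :=
    (hxy.resolve_left fun h => h₁ h.1).resolve_left fun h => h₃ h.1
  have commute_of_centralizer_eq {g g' : G} (h : Subgroup.centralizer {g} =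
      Subgroup.centralizer {g'}) : Commute g g' :=
    Subgroup.mem_centralizer_singleton_iff.1 (h ▸ Subgroup.mem_centralizer_singleton_iff.2 rfl)
  refine ⟨commute_of_centralizer_eq (ha.trans ha'.symm), commute_of_centralizer_eq
    (hc.trans hc'.symm), γ, ?_, ε, ?_, hγε⟩
  · rw [ha]; exact Subgroup.zpowers_le.2 (pow_mem (Subgroup.mem_zpowers a) q) hγ
  · rw [hc]; exact Subgroup.zpowers_le.2 (pow_mem (Subgroup.mem_zpowers c) k) hε

section RayPermutation

variable {ι A H : Type*} [Group A] [Group H] {φ : A →* H} [Nonempty ι]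

theorem map_base_of_comp_of_eq {ψ : PushoutI (fun _ : ι => φ) →* PushoutI (fun _ : ι => φ)}
    {σ : ι → ι} (hψ : ∀ i, ψ.comp (of i) = of (φ := fun _ => φ) (σ i)) (a : A) :
    ψ (base _ a) = base _ a := by
  obtain ⟨i⟩ := ‹Nonempty ι›
  simpa only [MonoidHom.comp_apply, of_apply_eq_base] using DFunLike.congr_fun (hψ i) (φ a)

theorem injective_of_comp_of_eq_perm
    {Φ : Equiv.Perm ι → (PushoutI (fun _ : ι => φ) →* PushoutI (fun _ : ι => φ))}
    (hΦ : ∀ σ i, (Φ σ).comp (of i) = of (φ := fun _ => φ) (σ i)) (σ : Equiv.Perm ι) :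
    Function.Injective (Φ σ) := by
  have hinv : (Φ σ⁻¹).comp (Φ σ) = MonoidHom.id _ := hom_ext_nonempty fun i => by
    rw [MonoidHom.comp_assoc, hΦ, hΦ, Equiv.Perm.coe_inv, Equiv.symm_apply_apply,
      MonoidHom.id_comp]
  exact Function.LeftInverse.injective (g := Φ σ⁻¹) (DFunLike.congr_fun hinv)

end RayPermutation

namespace IsReducedDatum

variable {A H : Type*} [Group A] [Group H] {n : ℕ} {φ : A →* H}
  {x y : PushoutI (fun _ : Fin n => φ)} {a b : A} {L M : List (Fin n × H)}

theorem exists_reduced_word (hx : IsReducedDatum φ x a L) :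
    ∃ w : CoprodI.Word (fun _ : Fin n => H), Reduced (fun _ => φ) w ∧
      w.toList.map Sigma.fst = L.map Prod.fst ∧ x = base _ a * ofCoprodI w.prod := by
  obtain ⟨hred, hchain, rfl⟩ := hx
  refine ⟨⟨L.map fun p => ⟨p.1, p.2⟩, ?_, by rwa [List.isChain_map]⟩, ?_, by simp, ?_⟩
  · simp only [List.mem_map]
    rintro _ ⟨p, hp, rfl⟩ h1
    exact hred p hp ⟨1, by simpa using h1.symm⟩
  · rintro _ hp
    simp only [List.mem_map] at hp
    obtain ⟨p, hp, rfl⟩ := hp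
    exact hred p hp
  · simp [CoprodI.Word.prod, map_list_prod, ofCoprodI_of, Function.comp_def]

theorem map_fst_eq_s3 (hφ : Function.Injective φ) (hx : IsReducedDatum φ x a L)
    (hx' : IsReducedDatum φ x b M) : L.map Prod.fst = M.map Prod.fst := by
  obtain ⟨d⟩ := NormalWord.transversal_nonempty (fun _ : Fin n => φ) fun _ => hφ
  obtain ⟨w, hw, hwL, hxw⟩ := hx.exists_reduced_word
  obtain ⟨w', hw', hwM, hxw'⟩ := hx'.exists_reduced_word
  obtain ⟨v, hv, hvw⟩ := hw.exists_normalWord_prod_eq d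
  obtain ⟨v', hv', hvw'⟩ := hw'.exists_normalWord_prod_eq d
  have hvv' : a • v = b • v' := NormalWord.prod_injective <| by
    rw [NormalWord.prod_base_smul, NormalWord.prod_base_smul, hv, hv', ← hxw, ← hxw']
  rw [← hwL, ← hvw, ← hwM, ← hvw']
  exact (congrArg (fun v : NormalWord d => v.toList.map Sigma.fst) hvv' :)

theorem base_mul (hx : IsReducedDatum φ x a L) (c : A) :
    IsReducedDatum φ (base _ c * x) (c * a) L :=
  ⟨hx.1, hx.2.1, by rw [hx.2.2, map_mul, mul_assoc]⟩

theorem mul_base {i : Fin n} {k : H} (hx : IsReducedDatum φ x a (L ++ [(i, k)])) (c : A) :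
    IsReducedDatum φ (x * base _ c) a (L ++ [(i, k * φ c)]) := by
  obtain ⟨hred, hchain, rfl⟩ := hx
  refine ⟨?_, ?_, ?_⟩
  · simp only [List.mem_append, List.mem_singleton] at hred ⊢
    rintro p (hp | rfl)
    · exact hred p (.inl hp)
    · rintro ⟨y, hy⟩
      exact hred (i, k) (.inr rfl) ⟨y * c⁻¹, by simp [hy]⟩
  · have hfst : (L ++ [(i, k * φ c)]).map Prod.fst = (L ++ [(i, k)]).map Prod.fst := by simp
    have := (List.isChain_map (R := (· ≠ ·)) Prod.fst).2 hchain
    rw [← hfst] at this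
    exact (List.isChain_map (R := (· ≠ ·)) Prod.fst).1 this
  · simp [← of_apply_eq_base (fun _ : Fin n => φ) i c, mul_assoc]

theorem exists_mul (hx : IsReducedDatum φ x a L) (hy : IsReducedDatum φ y b M) (hL : L ≠ [])
    (hLM : ∀ i ∈ (L.map Prod.fst).getLast?, ∀ j ∈ (M.map Prod.fst).head?, i ≠ j) :
    ∃ N : List (Fin n × H), N.map Prod.fst = L.map Prod.fst ++ M.map Prod.fst ∧
      IsReducedDatum φ (x * y) a N := by
  obtain ⟨L, ⟨i, k⟩, rfl⟩ := L.eq_nil_or_concat'.resolve_left hL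
  obtain ⟨hred, hchain, hxb⟩ := hx.mul_base b
  refine ⟨L ++ [(i, k * φ b)] ++ M, by simp, ?_, ?_, ?_⟩
  · exact List.forall_mem_append.2 ⟨hred, hy.1⟩
  · exact List.isChain_append.2 ⟨hchain, hy.2.1, by simpa using hLM⟩
  · rw [hy.2.2, ← mul_assoc, hxb]
    simp only [List.map_append, List.prod_append, mul_assoc]

theorem not_commute (hφ : Function.Injective φ) (hx : IsReducedDatum φ x a L)
    (hy : IsReducedDatum φ y b M) (hL : L ≠ []) (hM : M ≠ [])
    (hhead : (L.map Prod.fst).head? ≠ (M.map Prod.fst).head?)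
    (hLM : ∀ i ∈ (L.map Prod.fst).getLast?, ∀ j ∈ (M.map Prod.fst).head?, i ≠ j)
    (hML : ∀ j ∈ (M.map Prod.fst).getLast?, ∀ i ∈ (L.map Prod.fst).head?, j ≠ i) :
    ¬ Commute x y := by
  intro hxy
  obtain ⟨N, hN, hxyN⟩ := hx.exists_mul hy hL hLM
  obtain ⟨N', hN', hyxN⟩ := hy.exists_mul hx hM hML
  rw [hxy.eq] at hxyN
  have := congrArg List.head? (hxyN.map_fst_eq_s3 hφ hyxN)
  rw [hN, hN', List.head?_append_of_ne_nil _ (by simpa),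
    List.head?_append_of_ne_nil _ (by simpa)] at this
  exact hhead this

theorem map_fst_eq_of_eq_base_mul_mul_base (hφ : Function.Injective φ)
    (hx : IsReducedDatum φ x a L) (hy : IsReducedDatum φ y b M) (hL : L ≠ []) {α χ : A}
    (hxy : y = base _ α * x * base _ χ) : L.map Prod.fst = M.map Prod.fst := by
  obtain ⟨L, ⟨i, k⟩, rfl⟩ := L.eq_nil_or_concat'.resolve_left hL
  subst hxy
  simpa using ((hx.base_mul α).mul_base χ).map_fst_eq_s3 hφ hy

theorem map_perm [Nonempty (Fin n)]
    {ψ : PushoutI (fun _ : Fin n => φ) →* PushoutI (fun _ : Fin n => φ)}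
    {σ : Equiv.Perm (Fin n)} (hψ : ∀ i, ψ.comp (of i) = of (φ := fun _ => φ) (σ i))
    (hx : IsReducedDatum φ x a L) : IsReducedDatum φ (ψ x) a (L.map (Prod.map σ id)) := by
  obtain ⟨hred, hchain, rfl⟩ := hx
  have hψ' (i : Fin n) (k : H) : ψ (of i k) = of (σ i) k := DFunLike.congr_fun (hψ i) k
  refine ⟨?_, ?_, ?_⟩
  · rintro _ hq
    obtain ⟨p, hp, rfl⟩ := List.mem_map.1 hq
    exact hred p hp
  · show List.IsChain _ _
    rw [List.isChain_map]
    exact hchain.imp fun _ _ h => σ.injective.ne h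
  · simp [map_base_of_comp_of_eq hψ, map_list_prod, Function.comp_def, hψ']

end IsReducedDatum

section Star

variable {A H : Type*} [Group A] [Group H] {n : ℕ} [Nonempty (Fin n)] {φ : A →* H}
  {Φ : Equiv.Perm (Fin n) → (PushoutI (fun _ : Fin n => φ) →* PushoutI (fun _ : Fin n => φ))}
  {σ τ : Equiv.Perm (Fin n)}

theorem not_commute_map_perm (hφ : Function.Injective φ)
    (hΦ : ∀ σ i, (Φ σ).comp (of i) = of (φ := fun _ => φ) (σ i))
    {x : PushoutI (fun _ : Fin n => φ)} {a : A} {L : List (Fin n × H)}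
    (hx : IsReducedDatum φ x a L) (hL : L ≠ [])
    (hστ : Disjoint (σ '' {(L.head hL).1, (L.getLast hL).1})
      (τ '' {(L.head hL).1, (L.getLast hL).1})) :
    ¬ Commute (Φ σ x) (Φ τ x) := by
  have hne {i j} (hi : i ∈ ({(L.head hL).1, (L.getLast hL).1} : Set (Fin n)))
      (hj : j ∈ ({(L.head hL).1, (L.getLast hL).1} : Set (Fin n))) : σ i ≠ τ j :=
    Set.disjoint_iff_forall_ne.1 hστ (Set.mem_image_of_mem σ hi) (Set.mem_image_of_mem τ hj)
  refine (hx.map_perm (hΦ σ)).not_commute hφ (hx.map_perm (hΦ τ)) (by simpa) (by simpa) ?_ ?_ ?_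
  all_goals simp only [List.map_map, List.head?_map, List.getLast?_map,
    List.head?_eq_some_head hL, List.getLast?_eq_some_getLast hL, Option.map_some,
    Function.comp_apply, Prod.map_fst, Option.mem_def, Option.some_inj, forall_eq']
  exacts [(Option.some_injective _).ne (hne (.inl rfl) (.inl rfl)), hne (.inr rfl) (.inl rfl),
    (hne (.inl rfl) (.inr rfl)).symm]

theorem not_dCosetRel_map_perm_of_nil (hφ : Function.Injective φ)
    (hΦ : ∀ σ i, (Φ σ).comp (of i) = of (φ := fun _ => φ) (σ i))
    (hcent : ∀ a : A, a ≠ 1 →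
      Subgroup.centralizer {base (fun _ : Fin n => φ) a} ≤ (base (fun _ : Fin n => φ)).range)
    {u g h : PushoutI (fun _ : Fin n => φ)} {au ag ah : A} (hu : u ≠ 1) (hh : h ≠ 1)
    (hredu : IsReducedDatum φ u au []) (hredh : IsReducedDatum φ h ah [])
    {L : List (Fin n × H)} (hg : IsReducedDatum φ g ag L) (hL : L ≠ [])
    (hστ : σ (L.head hL).1 ≠ τ (L.head hL).1) (q k : ℕ) :
    ¬ DCosetRel q k (Φ σ u, Φ σ g, Φ σ h) (Φ τ u, Φ τ g, Φ τ h) := by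
  obtain rfl : u = base _ au := by simpa using hredu.2.2
  obtain rfl : h = base _ ah := by simpa using hredh.2.2
  have hau : au ≠ 1 := by rintro rfl; simp at hu
  have hah : ah ≠ 1 := by rintro rfl; simp at hh
  intro hrel
  simp only [map_base_of_comp_of_eq (hΦ σ), map_base_of_comp_of_eq (hΦ τ)] at hrel
  obtain ⟨-, -, γ, hγ, ε, hε, hγε⟩ := hrel.commute_and_exists_of_ne_one hu hh
  obtain ⟨α, rfl⟩ := hcent au hau hγ
  obtain ⟨χ, rfl⟩ := hcent ah hah hε
  have := (hg.map_perm (hΦ σ)).map_fst_eq_of_eq_base_mul_mul_base hφ (hg.map_perm (hΦ τ))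
    (by simpa) hγε.symm
  apply hστ
  simpa [List.head?_eq_some_head hL] using congrArg List.head? this

end Star

/-- Lemma 3.4 (OrbitsDCosets): in a star of isomorphic groups with `n` rays, in which
centralizers of nontrivial elements of the amalgamated subgroup lie in the amalgamated
subgroup, the orbit of a triple `(u, g, h)` (with `u ≠ 1`, `h ≠ 1`, given by reduced words
whose lengths sum to at least 1) under the ray-permuting automorphisms meets at least
`⌊(n-2)/2⌋` many `(q,k)`-double-cosets, for all `q, k`. -/
theorem orbits_double_cosets {A H : Type*} [Group A] [Group H] (φ : A →* H)
    (hφ : Function.Injective φ) (n : ℕ)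
    (Φ : Equiv.Perm (Fin n) →
      (Monoid.PushoutI (fun _ : Fin n => φ) →* Monoid.PushoutI (fun _ : Fin n => φ)))
    (hΦ : ∀ (σ : Equiv.Perm (Fin n)) (i : Fin n),
      (Φ σ).comp (Monoid.PushoutI.of (φ := fun _ : Fin n => φ) i) =
        Monoid.PushoutI.of (φ := fun _ : Fin n => φ) (σ i))
    (hcent : ∀ a : A, a ≠ 1 →
      Subgroup.centralizer {Monoid.PushoutI.base (fun _ : Fin n => φ) a} ≤
        (Monoid.PushoutI.base (fun _ : Fin n => φ)).range)
    (u g h : Monoid.PushoutI (fun _ : Fin n => φ))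
    (au ag ah : A) (lu lg lh : List (Fin n × H)) (p l m : ℕ)
    (hlu : lu.length = p) (hlg : lg.length = l) (hlh : lh.length = m)
    (hredu : IsReducedDatum φ u au lu)
    (hredg : IsReducedDatum φ g ag lg) (hredh : IsReducedDatum φ h ah lh)
    (hu : u ≠ 1) (hh : h ≠ 1) (hplm : 1 ≤ p + l + m) :
    ∀ q k : ℕ, ∃ T : Finset (Equiv.Perm (Fin n)), T.card = (n - 2) / 2 ∧
      ∀ σ ∈ T, ∀ τ ∈ T, σ ≠ τ →
        ¬ DCosetRel q k (Φ σ u, Φ σ g, Φ σ h) (Φ τ u, Φ τ g, Φ τ h) := by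
  intro q k
  obtain rfl | hn := n.eq_zero_or_pos
  · exact ⟨∅, rfl, by simp⟩
  have : Nonempty (Fin n) := ⟨⟨0, hn⟩⟩
  suffices ∃ f ℓ : Fin n, ∀ σ τ : Equiv.Perm (Fin n), Disjoint (σ '' {f, ℓ}) (τ '' {f, ℓ}) →
      ¬ DCosetRel q k (Φ σ u, Φ σ g, Φ σ h) (Φ τ u, Φ τ g, Φ τ h) by
    obtain ⟨f, ℓ, hsep⟩ := this
    obtain ⟨T, hT, hTsep⟩ :=
      exists_finset_perm_pairwise_disjoint_image (k := (n - 2) / 2) (by omega) f ℓ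
    exact ⟨T, hT, fun σ hσ τ hτ hστ => hsep σ τ (hTsep hσ hτ hστ)⟩
  have hne σ : Φ σ u ≠ 1 ∧ Φ σ h ≠ 1 := by
    simpa only [ne_eq, map_eq_one_iff _ (injective_of_comp_of_eq_perm hΦ σ)] using ⟨hu, hh⟩
  obtain hlu_ne | rfl := ne_or_eq lu []
  · exact ⟨_, _, fun σ τ hστ hrel => not_commute_map_perm hφ hΦ hredu hlu_ne hστ
      (hrel.commute_and_exists_of_ne_one (hne σ).1 (hne σ).2).1⟩
  obtain hlh_ne | rfl := ne_or_eq lh []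
  · exact ⟨_, _, fun σ τ hστ hrel => not_commute_map_perm hφ hΦ hredh hlh_ne hστ
      (hrel.commute_and_exists_of_ne_one (hne σ).1 (hne σ).2).2.1⟩
  have hlg_ne : lg ≠ [] := by
    rintro rfl
    simp [← hlu, ← hlg, ← hlh] at hplm
  set f := (lg.head hlg_ne).1
  exact ⟨f, f, fun σ τ hστ => not_dCosetRel_map_perm_of_nil hφ hΦ hcent hu hh hredu hredh hredg
    hlg_ne (Set.disjoint_iff_forall_ne.1 hστ (Set.mem_image_of_mem σ (.inl rfl))
      (Set.mem_image_of_mem τ (.inl rfl))) q k⟩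
end

section
/- Let A and H be groups, φ : A →* H an injective homomorphism, n : ℕ, and let G = Monoid.PushoutI (fun _ : Fin n => φ) be the star of isomorphic groups with n rays, with ray-permuting homomorphisms Φ σ : G →* G for σ : Equiv.Perm (Fin n). Assume that for every nontrivial a ∈ A, Subgroup.centralizer {base a} ≤ base.range. Suppose h ∈ G admits a reduced word datum of length m ≥ 2. Then there exists a finset T of permutations of Fin n with T.card = (n − 2) / 2 (natural-number operations, i.e. ⌊(n−2)/2⌋) such that for all σ, τ ∈ T with σ ≠ τ, the elements Φ σ h and Φ τ h do not commute: Φ σ h * Φ τ h ≠ Φ τ h * Φ σ h. -/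
open Monoid

/-! Absorb `base a` into the first letter, so that `h` is a reduced word `w` with first index
`i` and last index `j`, and `Φ σ h` is `w` with its indices relabelled by `σ`. If the last
index of each of `σ w`, `τ w` differs from the first index of the other, both `σ w * τ w` and
`τ w * σ w` are reduced words, so if they commute the normal form theorem for amalgamated
products makes their index sequences equal; in particular `σ i = τ i`. Permutations sending
`i` to `2k` and `j` into `{2k, 2k + 1}`, for `k < (n - 2) / 2`, avoid all these coincidences
pairwise. -/

theorem Equiv.Perm.exists_apply_eq_apply_eq {α : Type*} [DecidableEq α] {i j u v : α}
    (hij : i ≠ j) (huv : u ≠ v) : ∃ σ : Perm α, σ i = u ∧ σ j = v := by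
  refine ⟨(swap i u).trans (swap (swap i u j) v), ?_, by simp⟩
  have : swap i u j ≠ u := by
    rw [Ne, swap_apply_eq_iff, swap_apply_right]
    exact hij.symm
  simp [swap_apply_of_ne_of_ne this.symm huv]

theorem Equiv.Perm.exists_finset_card_eq_forall_apply_ne {n : ℕ} (K : ℕ) (hK : 2 * K ≤ n)
    (i j : Fin n) : ∃ T : Finset (Perm (Fin n)), T.card = K ∧
      ∀ σ ∈ T, ∀ τ ∈ T, σ ≠ τ → σ i ≠ τ i ∧ σ j ≠ τ i := by
  have hpair : ∀ k : Fin K, ∃ σ : Perm (Fin n),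
      (σ i : ℕ) = 2 * k ∧ ((σ j : ℕ) = 2 * k ∨ (σ j : ℕ) = 2 * k + 1) := by
    intro k
    let u : Fin n := ⟨2 * k, by omega⟩
    let v : Fin n := ⟨2 * k + 1, by omega⟩
    by_cases hij : i = j
    · exact ⟨swap i u, by simp [u], by simp [u, ← hij]⟩
    · obtain ⟨σ, hσi, hσj⟩ := exists_apply_eq_apply_eq hij (u := u) (v := v) (by simp [u, v])
      exact ⟨σ, by simp [hσi, u], by simp [hσj, v]⟩
  choose e hei hej using hpair
  have he : Function.Injective e := fun k k' h => by
    have := hei k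
    rw [h, hei k'] at this
    omega
  refine ⟨Finset.univ.map ⟨e, he⟩, by simp, ?_⟩
  simp only [Finset.mem_map, Finset.mem_univ, true_and, Function.Embedding.coeFn_mk]
  rintro _ ⟨k, rfl⟩ _ ⟨k', rfl⟩ hne
  have hk : (k : ℕ) ≠ k' := fun h => hne (congrArg e (Fin.ext h))
  have := hej k
  simp only [Ne, Fin.ext_iff, hei]
  omega

namespace Monoid.PushoutI

open CoprodI

theorem Reduced.map_fst_eq_of_prod_eq {ι : Type*} {G : ι → Type*} [∀ i, Group (G i)]
    {H : Type*} [Group H] {φ : ∀ i, H →* G i} (hφ : ∀ i, Function.Injective (φ i))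
    {w₁ w₂ : Word G} (hw₁ : Reduced φ w₁) (hw₂ : Reduced φ w₂)
    (h : ofCoprodI (φ := φ) w₁.prod = ofCoprodI w₂.prod) :
    w₁.toList.map Sigma.fst = w₂.toList.map Sigma.fst := by
  obtain ⟨d⟩ := NormalWord.transversal_nonempty φ hφ
  obtain ⟨v₁, hv₁, hfst₁⟩ := hw₁.exists_normalWord_prod_eq d
  obtain ⟨v₂, hv₂, hfst₂⟩ := hw₂.exists_normalWord_prod_eq d
  have : v₁ = v₂ := NormalWord.prod_injective (by rw [hv₁, hv₂, h])
  rw [← hfst₁, ← hfst₂, this]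

variable {ι κ A H : Type*} [Group A] [Group H] (φ : A →* H)

def ofList (l : List (ι × H)) : PushoutI (fun _ : ι => φ) :=
  (l.map fun p => of (φ := fun _ : ι => φ) p.1 p.2).prod

def IsReducedList (l : List (ι × H)) : Prop :=
  (∀ p ∈ l, p.2 ∉ Set.range φ) ∧ l.IsChain fun p q => p.1 ≠ q.1

variable {φ}

@[simp]
theorem ofList_append (l₁ l₂ : List (ι × H)) :
    ofList φ (l₁ ++ l₂) = ofList φ l₁ * ofList φ l₂ := by
  simp [ofList]

theorem ofList_cons (p : ι × H) (l : List (ι × H)) :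
    ofList φ (p :: l) = of p.1 p.2 * ofList φ l := by
  simp [ofList]

theorem map_ofList {Ψ : PushoutI (fun _ : ι => φ) →* PushoutI (fun _ : κ => φ)} {σ : ι → κ}
    (hΨ : ∀ i, Ψ.comp (of i) = of (φ := fun _ : κ => φ) (σ i)) (l : List (ι × H)) :
    Ψ (ofList φ l) = ofList φ (l.map (Prod.map σ id)) := by
  simp [ofList, map_list_prod, Function.comp_def, ← MonoidHom.comp_apply, hΨ]

namespace IsReducedList

variable {l l₁ l₂ : List (ι × H)}

def toWord (hl : IsReducedList φ l) : Word fun _ : ι => H where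
  toList := l.map fun p => ⟨p.1, p.2⟩
  ne_one := by
    simp only [List.mem_map]
    rintro _ ⟨p, hp, rfl⟩ h1
    exact hl.1 p hp ⟨1, by simp [show p.2 = 1 from h1]⟩
  chain_ne := (List.isChain_map _).2 hl.2

theorem toWord_reduced (hl : IsReducedList φ l) : Reduced (fun _ : ι => φ) hl.toWord := by
  simp only [Reduced, toWord, List.mem_map]
  rintro _ ⟨p, hp, rfl⟩ ⟨b, hb⟩
  exact hl.1 p hp ⟨b, hb⟩

theorem ofCoprodI_toWord_prod (hl : IsReducedList φ l) :
    ofCoprodI hl.toWord.prod = ofList φ l := by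
  simp [toWord, Word.prod, ofList, map_list_prod, Function.comp_def]

theorem map_fst_eq_of_ofList_eq (hφ : Function.Injective φ) (hl₁ : IsReducedList φ l₁)
    (hl₂ : IsReducedList φ l₂) (h : ofList φ l₁ = ofList φ l₂) :
    l₁.map Prod.fst = l₂.map Prod.fst := by
  have := hl₁.toWord_reduced.map_fst_eq_of_prod_eq (fun _ => hφ) hl₂.toWord_reduced
    (by rw [ofCoprodI_toWord_prod, ofCoprodI_toWord_prod, h])
  simpa [toWord, Function.comp_def] using this

theorem map_prodMap (hl : IsReducedList φ l) {σ : ι → κ} (hσ : Function.Injective σ) :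
    IsReducedList φ (l.map (Prod.map σ id)) := by
  refine ⟨?_, (List.isChain_map _).2 (hl.2.imp fun _ _ hne => hσ.ne hne)⟩
  simp only [List.mem_map]
  rintro _ ⟨p, hp, rfl⟩
  exact hl.1 p hp

theorem append (hl₁ : IsReducedList φ l₁) (hl₂ : IsReducedList φ l₂)
    (hne : ∀ x ∈ l₁.getLast?, ∀ y ∈ l₂.head?, x.1 ≠ y.1) : IsReducedList φ (l₁ ++ l₂) :=
  ⟨fun p hp => (List.mem_append.1 hp).elim (hl₁.1 p) (hl₂.1 p),
    List.isChain_append.2 ⟨hl₁.2, hl₂.2, hne⟩⟩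

theorem mul_head {i : ι} {x : H} (hl : IsReducedList φ ((i, x) :: l)) (a : A) :
    IsReducedList φ ((i, φ a * x) :: l) := by
  refine ⟨?_, by simpa [IsReducedList, List.isChain_cons] using hl.2⟩
  rintro p (_ | ⟨_, hp⟩)
  · rintro ⟨b, hb⟩
    exact hl.1 (i, x) List.mem_cons_self ⟨a⁻¹ * b, by simp [hb]⟩
  · exact hl.1 p (List.mem_cons_of_mem _ hp)

end IsReducedList

theorem base_mul_ofList_cons (a : A) (i : ι) (x : H) (l : List (ι × H)) :
    base (fun _ : ι => φ) a * ofList φ ((i, x) :: l) = ofList φ ((i, φ a * x) :: l) := by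
  simp [ofList_cons, ← of_apply_eq_base (fun _ : ι => φ) i a, mul_assoc]

theorem not_commute_ofList_map_prodMap (hφ : Function.Injective φ) {l : List (ι × H)}
    (hl : IsReducedList φ l) {i j : ι} (hi : (l.map Prod.fst).head? = some i)
    (hj : (l.map Prod.fst).getLast? = some j) {σ τ : ι → κ} (hσ : Function.Injective σ)
    (hτ : Function.Injective τ) (hii : σ i ≠ τ i) (hji : σ j ≠ τ i) (hij : τ j ≠ σ i) :
    ¬Commute (ofList φ (l.map (Prod.map σ id))) (ofList φ (l.map (Prod.map τ id))) := by
  simp only [List.head?_map, List.getLast?_map, Option.map_eq_some_iff] at hi hj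
  obtain ⟨⟨i, x⟩, hx, rfl⟩ := hi
  obtain ⟨l', rfl⟩ := List.head?_eq_some_iff.1 hx
  obtain ⟨⟨j, y⟩, hy, rfl⟩ := hj
  have hreduced : ∀ {σ τ : ι → κ}, Function.Injective σ → Function.Injective τ → σ j ≠ τ i →
      IsReducedList φ
        (((i, x) :: l').map (Prod.map σ id) ++ ((i, x) :: l').map (Prod.map τ id)) := by
    intro σ τ hσ hτ hne
    refine (hl.map_prodMap hσ).append (hl.map_prodMap hτ) ?_
    rw [List.getLast?_map, hy]
    simpa using hne
  intro hcomm
  have := (hreduced hσ hτ hji).map_fst_eq_of_ofList_eq hφ (hreduced hτ hσ hij)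
    (by simpa only [ofList_append] using hcomm.eq)
  exact hii (by simpa using congrArg List.head? this)

end Monoid.PushoutI

theorem images_pairwise_not_commute_general {A H : Type*} [Group A] [Group H]
    (φ : A →* H) (hφ : Function.Injective φ) (n : ℕ)
    (Φ : Equiv.Perm (Fin n) →
      (Monoid.PushoutI (fun _ : Fin n => φ) →* Monoid.PushoutI (fun _ : Fin n => φ)))
    (hΦ : ∀ (σ : Equiv.Perm (Fin n)) (i : Fin n),
      (Φ σ).comp (Monoid.PushoutI.of (φ := fun _ : Fin n => φ) i) =
        Monoid.PushoutI.of (φ := fun _ : Fin n => φ) (σ i))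
    (h : Monoid.PushoutI (fun _ : Fin n => φ)) (a : A) (l : List (Fin n × H)) (m : ℕ)
    (hlen : l.length = m) (hm : 2 ≤ m)
    (hred : IsReducedDatum φ h a l) :
    ∃ T : Finset (Equiv.Perm (Fin n)), T.card = (n - 2) / 2 ∧
      ∀ σ ∈ T, ∀ τ ∈ T, σ ≠ τ → Φ σ h * Φ τ h ≠ Φ τ h * Φ σ h := by
  obtain ⟨hr, hc, hh⟩ := hred
  obtain ⟨⟨i, x⟩, l, rfl⟩ := List.exists_cons_of_length_pos (by omega : 0 < l.length)
  set w := (i, φ a * x) :: l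
  replace hh : h = PushoutI.ofList φ w := hh.trans (PushoutI.base_mul_ofList_cons a i x l)
  have hw : PushoutI.IsReducedList φ w := PushoutI.IsReducedList.mul_head ⟨hr, hc⟩ a
  obtain ⟨j, hj⟩ : ∃ j, (w.map Prod.fst).getLast? = some j :=
    ⟨_, List.getLast?_eq_some_getLast (by simp [w])⟩
  obtain ⟨T, hT, hTne⟩ :=
    Equiv.Perm.exists_finset_card_eq_forall_apply_ne ((n - 2) / 2) (by omega) i j
  refine ⟨T, hT, fun σ hσ τ hτ hστ => ?_⟩
  rw [hh, PushoutI.map_ofList (hΦ σ), PushoutI.map_ofList (hΦ τ)]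
  exact PushoutI.not_commute_ofList_map_prodMap hφ hw rfl hj σ.injective τ.injective
    (hTne σ hσ τ hτ hστ).1 (hTne σ hσ τ hτ hστ).2 (hTne τ hτ σ hσ hστ.symm).2

/-- The main claim in the proof of Lemma 3.3 (OrbitsCosets): in a star of isomorphic
groups with `n` rays in which centralizers of nontrivial elements of the amalgamated
subgroup lie in the amalgamated subgroup, for a reduced word `h` of length at least `2`
there are `⌊(n-2)/2⌋` ray permutations whose images of `h` pairwise fail to commute. -/
theorem images_pairwise_not_commute {A H : Type*} [Group A] [Group H]
    (φ : A →* H) (hφ : Function.Injective φ) (n : ℕ)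
    (Φ : Equiv.Perm (Fin n) →
      (Monoid.PushoutI (fun _ : Fin n => φ) →* Monoid.PushoutI (fun _ : Fin n => φ)))
    (hΦ : ∀ (σ : Equiv.Perm (Fin n)) (i : Fin n),
      (Φ σ).comp (Monoid.PushoutI.of (φ := fun _ : Fin n => φ) i) =
        Monoid.PushoutI.of (φ := fun _ : Fin n => φ) (σ i))
    (hcent : ∀ a : A, a ≠ 1 →
      Subgroup.centralizer {Monoid.PushoutI.base (fun _ : Fin n => φ) a} ≤
        (Monoid.PushoutI.base (fun _ : Fin n => φ)).range)
    (h : Monoid.PushoutI (fun _ : Fin n => φ)) (a : A) (l : List (Fin n × H)) (m : ℕ)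
    (hlen : l.length = m) (hm : 2 ≤ m)
    (hred : IsReducedDatum φ h a l) :
    ∃ T : Finset (Equiv.Perm (Fin n)), T.card = (n - 2) / 2 ∧
      ∀ σ ∈ T, ∀ τ ∈ T, σ ≠ τ → Φ σ h * Φ τ h ≠ Φ τ h * Φ σ h :=
  images_pairwise_not_commute_general φ hφ n Φ hΦ h a l m hlen hm hred
end

section
/- Let A and H be groups, φ : A →* H an injective homomorphism, n : ℕ, and let G = Monoid.PushoutI (fun _ : Fin n => φ) be the star of isomorphic groups with n rays. Let i, j : Fin n with i ≠ j, and let x, y ∈ H with x ∉ Set.range φ and y ∉ Set.range φ. Then the elements of i x and of j y of G do not commute: (of i x) * (of j y) ≠ (of j y) * (of i x). -/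
open Monoid

/-- The claim used in the proof of Lemma 3.3 (OrbitsCosets) for elements of reduced length
one: in a star of isomorphic groups, images of elements outside the amalgamated subgroup in
distinct factor subgroups do not commute. -/
theorem of_mul_of_ne_of_mul_of {A H : Type*} [Group A] [Group H]
    (φ : A →* H) (hφ : Function.Injective φ) (n : ℕ)
    (i j : Fin n) (hij : i ≠ j) (x y : H)
    (hx : x ∉ Set.range φ) (hy : y ∉ Set.range φ) :
    Monoid.PushoutI.of (φ := fun _ : Fin n => φ) i x *
        Monoid.PushoutI.of (φ := fun _ : Fin n => φ) j y ≠
      Monoid.PushoutI.of (φ := fun _ : Fin n => φ) j y *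
        Monoid.PushoutI.of (φ := fun _ : Fin n => φ) i x := by
  intro h
  set φ' : ∀ _ : Fin n, A →* H := fun _ => φ with hφ'
  have hx1 : x ≠ 1 := fun h1 => hx ⟨1, by simp [h1]⟩
  have hy1 : y ≠ 1 := fun h1 => hy ⟨1, by simp [h1]⟩
  let w : Monoid.CoprodI.Word (fun _ : Fin n => H) :=
    ⟨[⟨i, x⟩, ⟨j, y⟩, ⟨i, x⁻¹⟩, ⟨j, y⁻¹⟩], by
      simp_all [Ne.symm hij], by simp_all [List.isChain_cons_cons, Ne.symm hij]⟩
  have hw : Monoid.PushoutI.Reduced φ' w := by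
    rintro ⟨k, g⟩ hg
    simp only [w, List.mem_cons, List.mem_singleton, List.not_mem_nil, or_false] at hg
    rcases hg with h' | h' | h' | h'
    · cases h'; exact fun ⟨a, ha⟩ => hx ⟨a, ha⟩
    · cases h'; exact fun ⟨a, ha⟩ => hy ⟨a, ha⟩
    · cases h'; exact fun ⟨a, ha⟩ => hx ⟨a⁻¹, by rw [map_inv, ha, inv_inv]⟩
    · cases h'; exact fun ⟨a, ha⟩ => hy ⟨a⁻¹, by rw [map_inv, ha, inv_inv]⟩
  have hmem : Monoid.PushoutI.ofCoprodI (φ := φ') w.prod ∈ (Monoid.PushoutI.base φ').range := by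
    have : Monoid.PushoutI.ofCoprodI (φ := φ') w.prod = 1 := by
      simp only [w, Monoid.CoprodI.Word.prod, List.map_cons, List.prod_cons, List.map_nil,
        List.prod_nil, map_mul, Monoid.PushoutI.ofCoprodI_of, mul_one]
      rw [map_inv, map_inv, ← mul_assoc, h]
      group
    rw [this]; exact one_mem _
  have := hw.eq_empty_of_mem_range (fun _ => hφ) hmem
  simp [w, Monoid.CoprodI.Word.empty] at this
end

section
/- Let A and H be groups, φ : A →* H an injective homomorphism, n : ℕ, and let G = Monoid.PushoutI (fun _ : Fin n => φ) be the star of isomorphic groups with n rays, with ray-permuting homomorphisms Φ σ : G →* G for σ : Equiv.Perm (Fin n). Suppose g ∈ G admits a reduced word datum of length ≥ 1 whose first index is i : Fin n. Let σ and τ be permutations of Fin n, each equal either to the identity or to a transposition Equiv.swap i j for some j ≠ i, and suppose σ ≠ τ. Then for every a ∈ A, Φ σ g ≠ Φ τ g * base a. -/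
/-!
Write `g = base b * w` with `w` the reduced word. Each `Φ ρ` fixes `base b` and moves every letter
of `w` to the factor `ρ` of its index, so `(Φ τ g)⁻¹ * Φ σ g` is the product of the reversed
inverse of `τ w` followed by `σ w`. The two halves meet in the factors `τ i ≠ σ i`, so this is a
nonempty reduced word, and by the normal form theorem for amalgamated products its value is not in
the image of `A`.
-/

open Monoid

theorem Equiv.Perm.injOn_apply_one_or_swap {α : Type*} [DecidableEq α] (i : α) :
    Set.InjOn (fun σ : Equiv.Perm α => σ i) {σ | σ = 1 ∨ ∃ j, j ≠ i ∧ σ = Equiv.swap i j} := by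
  rintro σ (rfl | ⟨j, hj, rfl⟩) τ (rfl | ⟨k, hk, rfl⟩) h <;>
    simp only [Equiv.Perm.coe_one, id_eq, Equiv.swap_apply_left] at h
  · rfl
  · exact absurd h.symm hk
  · exact absurd h hj
  · rw [h]

namespace Monoid.PushoutI

variable {ι A H : Type*} [Group A] [Group H] (φ : A →* H)

def wordProd (l : List (ι × H)) : PushoutI (fun _ : ι => φ) :=
  (l.map fun p => of (φ := fun _ : ι => φ) p.1 p.2).prod

def IsReducedWord (l : List (ι × H)) : Prop :=
  (∀ p ∈ l, p.2 ∉ Set.range φ) ∧ l.IsChain (fun p q => p.1 ≠ q.1)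

variable {φ}

def wordInv (l : List (ι × H)) : List (ι × H) :=
  (l.map fun p => (p.1, p.2⁻¹)).reverse

theorem wordProd_append (l₁ l₂ : List (ι × H)) :
    wordProd φ (l₁ ++ l₂) = wordProd φ l₁ * wordProd φ l₂ := by
  simp [wordProd]

theorem wordProd_wordInv (l : List (ι × H)) : wordProd φ (wordInv l) = (wordProd φ l)⁻¹ := by
  simp [wordProd, wordInv, List.prod_inv_reverse, List.map_reverse, Function.comp_def]

theorem map_wordProd {f : PushoutI (fun _ : ι => φ) →* PushoutI (fun _ : ι => φ)} {σ : ι → ι}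
    (hf : ∀ i, f.comp (of i) = of (φ := fun _ : ι => φ) (σ i)) (l : List (ι × H)) :
    f (wordProd φ l) = wordProd φ (l.map (Prod.map σ id)) := by
  simp only [wordProd, map_list_prod, List.map_map]
  exact congrArg List.prod (List.map_congr_left fun p _ => DFunLike.congr_fun (hf p.1) p.2)

theorem map_base_eq_of_comp_of [Nonempty ι]
    {f : PushoutI (fun _ : ι => φ) →* PushoutI (fun _ : ι => φ)} {σ : ι → ι}
    (hf : ∀ i, f.comp (of i) = of (φ := fun _ : ι => φ) (σ i)) (a : A) :
    f (base _ a) = base _ a := by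
  rw [← of_apply_eq_base _ (Classical.arbitrary ι), ← MonoidHom.comp_apply, hf,
    of_apply_eq_base, of_apply_eq_base]

namespace IsReducedWord

variable {l l₁ l₂ : List (ι × H)}

theorem map_fst (hl : IsReducedWord φ l) {σ : ι → ι} (hσ : Function.Injective σ) :
    IsReducedWord φ (l.map (Prod.map σ id)) := by
  refine ⟨?_, List.isChain_map_of_isChain _ (fun p q h hpq => h (hσ hpq)) hl.2⟩
  simp only [List.mem_map]
  rintro _ ⟨p, hp, rfl⟩
  exact hl.1 p hp

theorem wordInv (hl : IsReducedWord φ l) : IsReducedWord φ (wordInv l) := by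
  refine ⟨?_, ?_⟩
  · simp only [PushoutI.wordInv, List.mem_reverse, List.mem_map, forall_exists_index, and_imp]
    rintro _ p hp rfl ⟨a, ha⟩
    exact hl.1 p hp ⟨a⁻¹, by simp [ha]⟩
  · rw [PushoutI.wordInv, List.isChain_reverse]
    exact List.isChain_map_of_isChain _ (fun p q h hpq => h hpq.symm) hl.2

theorem append (h₁ : IsReducedWord φ l₁) (h₂ : IsReducedWord φ l₂)
    (hjoin : ∀ p ∈ l₁.getLast?, ∀ q ∈ l₂.head?, p.1 ≠ q.1) :
    IsReducedWord φ (l₁ ++ l₂) := by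
  refine ⟨?_, List.isChain_append.2 ⟨h₁.2, h₂.2, hjoin⟩⟩
  intro p hp
  rcases List.mem_append.1 hp with hp | hp
  exacts [h₁.1 p hp, h₂.1 p hp]

theorem wordProd_notMem_range (hφ : Function.Injective φ) (hl : IsReducedWord φ l)
    (hne : l ≠ []) : wordProd φ l ∉ (base fun _ : ι => φ).range := by
  classical
  let w : CoprodI.Word (fun _ : ι => H) :=
    ⟨l.map fun p => (⟨p.1, p.2⟩ : Σ _ : ι, H),
      by
        simp only [List.mem_map, forall_exists_index, and_imp]
        rintro _ p hp rfl h1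
        exact hl.1 p hp ⟨1, by simpa using h1.symm⟩,
      List.isChain_map_of_isChain (fun p : ι × H => (⟨p.1, p.2⟩ : Σ _ : ι, H)) (fun _ _ h => h)
        hl.2⟩
  have hw : Reduced (fun _ : ι => φ) w := by
    simp only [Reduced, w, List.mem_map, forall_exists_index, and_imp]
    rintro _ p hp rfl
    exact hl.1 p hp
  have hprod : ofCoprodI w.prod = wordProd φ l := by
    simp [w, CoprodI.Word.prod, wordProd, map_list_prod, Function.comp_def]
  intro hmem
  rw [← hprod] at hmem
  have := congrArg CoprodI.Word.toList (hw.eq_empty_of_mem_range (fun _ => hφ) hmem)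
  simp [w, CoprodI.Word.empty, hne] at this

end IsReducedWord

end Monoid.PushoutI

open PushoutI

theorem isReducedDatum_iff {A H : Type*} [Group A] [Group H] {n : ℕ} {φ : A →* H}
    {g : PushoutI (fun _ : Fin n => φ)} {a : A} {l : List (Fin n × H)} :
    IsReducedDatum φ g a l ↔
      IsReducedWord φ l ∧ g = base _ a * wordProd φ l :=
  and_assoc.symm

/-- The claim proved in the final case of Lemma 3.3 (OrbitsCosets): if `g` is a reduced
word of length `≥ 1` whose first letter lies in the factor indexed by `i`, and `σ ≠ τ` are
permutations each equal to the identity or to a transposition moving `i`, then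
`Φ σ g ≠ Φ τ g * base a` for every `a` in the amalgamated subgroup. -/
theorem swap_images_differ_mod_base {A H : Type*} [Group A] [Group H]
    (φ : A →* H) (hφ : Function.Injective φ) (n : ℕ)
    (Φ : Equiv.Perm (Fin n) →
      (Monoid.PushoutI (fun _ : Fin n => φ) →* Monoid.PushoutI (fun _ : Fin n => φ)))
    (hΦ : ∀ (σ : Equiv.Perm (Fin n)) (i : Fin n),
      (Φ σ).comp (Monoid.PushoutI.of (φ := fun _ : Fin n => φ) i) =
        Monoid.PushoutI.of (φ := fun _ : Fin n => φ) (σ i))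
    (g : Monoid.PushoutI (fun _ : Fin n => φ)) (b : A) (l : List (Fin n × H))
    (hlen : 1 ≤ l.length)
    (hred : IsReducedDatum φ g b l)
    (i : Fin n) (hfirst : l.head?.map Prod.fst = some i)
    (σ τ : Equiv.Perm (Fin n))
    (hσ : σ = 1 ∨ ∃ j : Fin n, j ≠ i ∧ σ = Equiv.swap i j)
    (hτ : τ = 1 ∨ ∃ j : Fin n, j ≠ i ∧ τ = Equiv.swap i j)
    (hστ : σ ≠ τ) :
    ∀ a : A, Φ σ g ≠ Φ τ g * Monoid.PushoutI.base (fun _ : Fin n => φ) a := by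
  intro a heq
  obtain ⟨hl, rfl⟩ := isReducedDatum_iff.1 hred
  have : Nonempty (Fin n) := ⟨i⟩
  have himage (ρ : Equiv.Perm (Fin n)) :
      Φ ρ (base _ b * wordProd φ l) = base _ b * wordProd φ (l.map (Prod.map ρ id)) := by
    rw [map_mul, map_base_eq_of_comp_of (hΦ ρ), map_wordProd (hΦ ρ)]
  have hw : IsReducedWord φ (wordInv (l.map (Prod.map τ id)) ++ l.map (Prod.map σ id)) := by
    refine (hl.map_fst τ.injective).wordInv.append (hl.map_fst σ.injective) ?_
    obtain ⟨⟨i₀, _⟩, rest, rfl⟩ := List.exists_cons_of_length_pos hlen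
    obtain rfl : i₀ = i := by simpa using hfirst
    simpa [wordInv] using fun h => hστ (Equiv.Perm.injOn_apply_one_or_swap i₀ hσ hτ h.symm)
  refine hw.wordProd_notMem_range hφ (by simpa [wordInv] using List.ne_nil_of_length_pos hlen)
    ⟨a, ?_⟩
  rw [himage, himage, mul_assoc] at heq
  rw [wordProd_append, wordProd_wordInv, eq_inv_mul_iff_mul_eq, mul_left_cancel heq]
end

section
/- Let S : Set ℕ have infinite complement, and let w ∈ FreeGroup ℕ. Suppose that for every group automorphism f : FreeGroup ℕ ≃* FreeGroup ℕ satisfying f (FreeGroup.of i) = FreeGroup.of i for all i ∈ S, we have f w = w. Then w lies in the subgroup Subgroup.closure (FreeGroup.of '' S). -/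
/-!
If some letter `a ∉ S` occurred in the reduced word of `w`, pick a letter `k ∉ S` not occurring
in `w` at all (the complement of `S` is infinite). The automorphism induced by the transposition
of `a` and `k` fixes every generator in `S`, hence fixes `w`; since renaming letters injectively
commutes with free reduction, it renames `a` to `k` in the reduced word of `w`, so `k` occurs in
`w`, a contradiction. Hence all letters of `w` lie in `S`.
-/

namespace FreeGroup

variable {α β : Type*}

theorem IsReduced.map {L : List (α × Bool)} (hL : IsReduced L) {f : α → β}
    (hf : Function.Injective f) : IsReduced (L.map fun a => (f a.1, a.2)) :=
  List.isChain_map_of_isChain _ (fun _ _ h heq => h (hf heq)) hL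

theorem toWord_map [DecidableEq α] [DecidableEq β] {f : α → β} (hf : Function.Injective f)
    (x : FreeGroup α) : (map f x).toWord = x.toWord.map fun a => (f a.1, a.2) := by
  conv_lhs => rw [← mk_toWord (x := x)]
  rw [map.mk, toWord_mk, (isReduced_toWord.map hf).reduce_eq]

theorem mk_mem_closure_of_image {S : Set α} {L : List (α × Bool)} (hL : ∀ a ∈ L, a.1 ∈ S) :
    mk L ∈ Subgroup.closure (of '' S) := by
  rw [← lift_of_apply (mk L : FreeGroup α), lift_mk]
  apply Subgroup.list_prod_mem
  intro y hy
  obtain ⟨⟨a, b⟩, ha, rfl⟩ := List.mem_map.1 hy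
  have hof : of a ∈ Subgroup.closure (of '' S) :=
    Subgroup.subset_closure (Set.mem_image_of_mem of (hL _ ha))
  cases b
  exacts [inv_mem hof, hof]

theorem mem_closure_of_forall_toWord_mem [DecidableEq α] {S : Set α} {x : FreeGroup α}
    (hx : ∀ a ∈ x.toWord, a.1 ∈ S) : x ∈ Subgroup.closure (of '' S) :=
  mk_toWord (x := x) ▸ mk_mem_closure_of_image hx

theorem mem_closure_of_forall_mulEquiv_fixed [DecidableEq α] {S : Set α} (hS : Sᶜ.Infinite)
    {x : FreeGroup α}
    (hx : ∀ f : FreeGroup α ≃* FreeGroup α, (∀ i ∈ S, f (of i) = of i) → f x = x) :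
    x ∈ Subgroup.closure (of '' S) := by
  refine mem_closure_of_forall_toWord_mem fun a ha => ?_
  by_contra haS
  obtain ⟨k, hkS, hkx⟩ := (hS.sdiff (x.toWord.map Prod.fst).finite_toSet).nonempty
  have hσ : ∀ i ∈ S, Equiv.swap a.1 k i = i := fun i hi =>
    Equiv.swap_apply_of_ne_of_ne (ne_of_mem_of_not_mem hi haS) (ne_of_mem_of_not_mem hi hkS)
  have hfixed : map (Equiv.swap a.1 k) x = x :=
    hx (freeGroupCongr (Equiv.swap a.1 k)) fun i hi => by simp [hσ i hi]
  have hk : (k, a.2) ∈ x.toWord := by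
    rw [← hfixed, toWord_map (Equiv.injective _)]
    simpa using List.mem_map_of_mem (f := fun b : α × Bool => (Equiv.swap a.1 k b.1, b.2)) ha
  exact hkx (List.mem_map_of_mem (f := Prod.fst) hk)

end FreeGroup

/-- An element of the free group of countably infinite rank fixed by every automorphism
fixing each generator from a set `S` of generators (whose complement is infinite) lies in
the subgroup generated by the generators from `S` (used implicitly in the proof of the
noncommutativity Proposition, Section 2 of the paper). -/
theorem fixed_by_all_autos_mem_closure (S : Set ℕ) (hS : Sᶜ.Infinite) (w : FreeGroup ℕ)
    (hw : ∀ f : FreeGroup ℕ ≃* FreeGroup ℕ,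
      (∀ i ∈ S, f (FreeGroup.of i) = FreeGroup.of i) → f w = w) :
    w ∈ Subgroup.closure (FreeGroup.of '' S) :=
  FreeGroup.mem_closure_of_forall_mulEquiv_fixed hS hw
end
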